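/- Every reciprocal pointer chain is a plateau: if (v_1,…,v_n) is an RPC, then for all 1 ≤ i < n, (v_i,v_{i+1}) ∈ E and c(p_{s,v_i,t}) = c(p_{s,v_{i+1},t}). -/

import Mathlib

variable {V : Type*}

/-- `p` is a path from `u` to `w` in the digraph with edge relation `E`:
a nonempty finite sequence of vertices beginning at `u` and ending at `w`
in which every consecutive pair of vertices is an edge. -/
def IsPath (E : V → V → Prop) (p : List V) (u w : V) : Prop :=
  p ≠ [] ∧ p.head? = some u ∧ p.getLast? = some w ∧ p.Chain' E

/-- The cost of a path: the sum of the weights of its edges. -/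
def pathCost (c : V → V → ℝ) (p : List V) : ℝ :=
  ((p.zip p.tail).map fun e => c e.1 e.2).sum

/-- A shortest path from `u` to `w`: a path from `u` to `w` of minimum cost. -/
def IsShortestPath (E : V → V → Prop) (c : V → V → ℝ) (p : List V) (u w : V) : Prop :=
  IsPath E p u w ∧ ∀ q, IsPath E q u w → pathCost c p ≤ pathCost c q

/-- A via-path for `v`: an `s`–`t` path of minimum cost among all `s`–`t`
paths passing through `v`. -/
def IsViaPath (E : V → V → Prop) (c : V → V → ℝ) (s t v : V) (p : List V) : Prop :=
  IsPath E p s t ∧ v ∈ p ∧ ∀ q, IsPath E q s t → v ∈ q → pathCost c p ≤ pathCost c q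

/-- The minimum cost of an `s`–`t` path passing through `v`. -/
noncomputable def viaCost (E : V → V → Prop) (c : V → V → ℝ) (s t v : V) : ℝ :=
  sInf (pathCost c '' {p | IsPath E p s t ∧ v ∈ p})

/-- A predecessor shortest path tree rooted at the source `s`: a map `b`
assigning to each vertex `v ≠ s` a vertex `b v` with an edge from `b v` to `v`,
such that iterating `b` from any `v` terminates at `s` and the resulting path
`pathTo v` (read from `s` to `v`) is a shortest path from `s` to `v`. -/
structure PredSPT (E : V → V → Prop) (c : V → V → ℝ) (s : V) where
  b : V → V
  pathTo : V → List V
  edge : ∀ v, v ≠ s → E (b v) v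
  pathTo_src : pathTo s = [s]
  pathTo_step : ∀ v, v ≠ s → pathTo v = pathTo (b v) ++ [v]
  shortest : ∀ v, IsShortestPath E c (pathTo v) s v

/-- A successor shortest path tree rooted at the target `t`: a map `f`
assigning to each vertex `v ≠ t` a vertex `f v` with an edge from `v` to `f v`,
such that iterating `f` from any `v` terminates at `t` and the resulting path
`pathFrom v` is a shortest path from `v` to `t`. -/
structure SuccSPT (E : V → V → Prop) (c : V → V → ℝ) (t : V) where
  f : V → V
  pathFrom : V → List V
  edge : ∀ v, v ≠ t → E v (f v)
  pathFrom_tgt : pathFrom t = [t]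
  pathFrom_step : ∀ v, v ≠ t → pathFrom v = v :: pathFrom (f v)
  shortest : ∀ v, IsShortestPath E c (pathFrom v) v t

variable {E : V → V → Prop} {c : V → V → ℝ} {s t : V}

/-- The cascading via-path (CVP) of a vertex `v`: the tree path `p̃_{s,v}`
followed by the tree path `p̃_{v,t}`. -/
def CVP (B : PredSPT E c s) (F : SuccSPT E c t) (v : V) : List V :=
  B.pathTo v ++ (F.pathFrom v).tail

/-- A reciprocal pointer chain (RPC): a nonempty sequence of vertices
`(v_1, …, v_n)` such that for all `1 ≤ i < n`, `b (v_{i+1}) = v_i` and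
`f (v_i) = v_{i+1}` (as pointers of the two shortest path trees, so in
particular `v_{i+1} ≠ s` and `v_i ≠ t`). -/
def IsRPC (B : PredSPT E c s) (F : SuccSPT E c t) (r : List V) : Prop :=
  r ≠ [] ∧ r.Chain' fun x y => y ≠ s ∧ x ≠ t ∧ B.b y = x ∧ F.f x = y

/-- A maximal RPC: an RPC whose set of vertices is not a (strict) subset of the
vertex set of any other RPC. -/
def IsMaximalRPC [DecidableEq V] (B : PredSPT E c s) (F : SuccSPT E c t)
    (r : List V) : Prop :=
  IsRPC B F r ∧
    ∀ r', IsRPC B F r' → r.toFinset ⊆ r'.toFinset → r'.toFinset = r.toFinset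

/-- The Jaccard distance between the vertex sets of two paths. -/
noncomputable def jaccardDist [DecidableEq V] (p q : List V) : ℝ :=
  1 - ((p.toFinset ∩ q.toFinset).card : ℝ) / ((p.toFinset ∪ q.toFinset).card : ℝ)

/-- A plateau: a nonempty sequence of vertices in which every consecutive pair
is an edge and all vertices have the same minimum via-path cost. -/
def IsPlateau (E : V → V → Prop) (c : V → V → ℝ) (s t : V) (q : List V) : Prop :=
  q ≠ [] ∧ q.Chain' fun x y => E x y ∧ viaCost E c s t x = viaCost E c s t y

/-- A maximal plateau: a plateau whose set of vertices is not a (strict) subset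
of the vertex set of any other plateau. -/
def IsMaximalPlateau [DecidableEq V] (E : V → V → Prop) (c : V → V → ℝ)
    (s t : V) (q : List V) : Prop :=
  IsPlateau E c s t q ∧
    ∀ q', IsPlateau E c s t q' → q.toFinset ⊆ q'.toFinset → q'.toFinset = q.toFinset

/-!
Splitting an `s`–`t` path at `v` shows that the tree path `p̃_{s,v}` followed by `p̃_{v,t}` is a
via-path of `v`. Along an RPC edge `(x, y)` the tree pointers agree, `b y = x` and `f x = y`, so
`p̃_{s,y} = p̃_{s,x} y` and `p̃_{x,t} = x p̃_{y,t}`: the two vertices have the same via-path, hence the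
same via-cost, and `(x, y) = (x, f x)` is an edge.
-/

theorem IsPath.append_cons_iff {l₁ l₂ : List V} {u v w : V} :
    IsPath E (l₁ ++ v :: l₂) u w ↔ IsPath E (l₁ ++ [v]) u v ∧ IsPath E (v :: l₂) v w := by
  have hhead : (l₁ ++ v :: l₂).head? = (l₁ ++ [v]).head? := by cases l₁ <;> simp
  simp only [IsPath, hhead, List.Chain', List.getLast?_append_cons]
  rw [List.isChain_split]
  constructor
  · rintro ⟨-, hu, hw, h₁, h₂⟩
    exact ⟨⟨by simp, hu, by simp, h₁⟩, by simp, rfl, hw, h₂⟩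
  · rintro ⟨⟨-, hu, -, h₁⟩, -, -, hw, h₂⟩
    exact ⟨by simp, hu, hw, h₁, h₂⟩

theorem pathCost_cons_cons (c : V → V → ℝ) (a b : V) (l : List V) :
    pathCost c (a :: b :: l) = c a b + pathCost c (b :: l) := by
  simp [pathCost]

theorem pathCost_append_cons (c : V → V → ℝ) (l₁ l₂ : List V) (v : V) :
    pathCost c (l₁ ++ v :: l₂) = pathCost c (l₁ ++ [v]) + pathCost c (v :: l₂) := by
  induction l₁ with
  | nil => simp [pathCost]
  | cons a l ih =>
    cases l with
    | nil => simp [pathCost]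
    | cons b l =>
      simp only [List.cons_append, pathCost_cons_cons] at ih ⊢
      rw [ih, add_assoc]

theorem IsViaPath.viaCost_eq {v : V} {p : List V} (hp : IsViaPath E c s t v p) :
    viaCost E c s t v = pathCost c p :=
  IsLeast.csInf_eq ⟨⟨p, ⟨hp.1, hp.2.1⟩, rfl⟩, by
    rintro _ ⟨q, ⟨hq, hvq⟩, rfl⟩
    exact hp.2.2 q hq hvq⟩

theorem isViaPath_append_cons {l₁ l₂ : List V} {v : V}
    (h₁ : IsShortestPath E c (l₁ ++ [v]) s v) (h₂ : IsShortestPath E c (v :: l₂) v t) :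
    IsViaPath E c s t v (l₁ ++ v :: l₂) := by
  refine ⟨IsPath.append_cons_iff.2 ⟨h₁.1, h₂.1⟩, by simp, fun q hq hvq => ?_⟩
  obtain ⟨q₁, q₂, rfl⟩ := List.append_of_mem hvq
  obtain ⟨hq₁, hq₂⟩ := IsPath.append_cons_iff.1 hq
  rw [pathCost_append_cons c l₁ l₂, pathCost_append_cons c q₁ q₂]
  exact add_le_add (h₁.2 _ hq₁) (h₂.2 _ hq₂)

theorem PredSPT.exists_pathTo_eq (B : PredSPT E c s) (v : V) : ∃ l, B.pathTo v = l ++ [v] :=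
  List.getLast?_eq_some_iff.1 (B.shortest v).1.2.2.1

theorem SuccSPT.pathFrom_eq_cons (F : SuccSPT E c t) (v : V) :
    F.pathFrom v = v :: (F.pathFrom v).tail := by
  obtain ⟨l, hl⟩ := List.head?_eq_some_iff.1 (F.shortest v).1.2.1
  simp [hl]

theorem isViaPath_CVP (B : PredSPT E c s) (F : SuccSPT E c t) (v : V) :
    IsViaPath E c s t v (CVP B F v) := by
  obtain ⟨l, hl⟩ := B.exists_pathTo_eq v
  have hF := F.shortest v
  rw [F.pathFrom_eq_cons v] at hF
  have := isViaPath_append_cons (hl ▸ B.shortest v) hF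
  simpa [CVP, hl] using this

theorem CVP_eq_of_reciprocal (B : PredSPT E c s) (F : SuccSPT E c t) {x y : V}
    (hys : y ≠ s) (hxt : x ≠ t) (hb : B.b y = x) (hf : F.f x = y) :
    CVP B F x = CVP B F y := by
  rw [CVP, CVP, F.pathFrom_step x hxt, B.pathTo_step y hys, hb, hf, F.pathFrom_eq_cons y]
  simp

theorem rpc_is_plateau_general
    {E : V → V → Prop} {c : V → V → ℝ} {s t : V}
    (B : PredSPT E c s) (F : SuccSPT E c t)
    (r : List V) (hr : IsRPC B F r) :
    r.Chain' fun x y => E x y ∧ viaCost E c s t x = viaCost E c s t y := by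
  refine hr.2.imp ?_
  rintro x y ⟨hys, hxt, hb, hf⟩
  refine ⟨hf ▸ F.edge x hxt, ?_⟩
  rw [(isViaPath_CVP B F x).viaCost_eq, (isViaPath_CVP B F y).viaCost_eq,
    CVP_eq_of_reciprocal B F hys hxt hb hf]

/-- Every reciprocal pointer chain is a plateau: each consecutive
pair of its vertices is an edge of `G` and the two vertices have equal minimum
via-path cost. -/
theorem rpc_is_plateau [Fintype V] [DecidableEq V]
    {E : V → V → Prop} {c : V → V → ℝ} {s t : V}
    (hc : ∀ u w, E u w → 0 ≤ c u w)
    (B : PredSPT E c s) (F : SuccSPT E c t)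
    (r : List V) (hr : IsRPC B F r) :
    r.Chain' fun x y => E x y ∧ viaCost E c s t x = viaCost E c s t y :=
  rpc_is_plateau_general B F r hr
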